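/- With ρ as in the Maier-Saupe self-consistent form, if γ₁ ≠ γ₃ and ∫_{S²} pᵢ² ρ(p) dp = γᵢ for all i, then 2β ∫_{S²} p₁² p₃² ρ(p) dp = 1. -/

import Mathlib

/-!
Let `R_θ` be the rotation by `θ` in the `(p₀, p₂)`-plane. It preserves the sphere and its
Hausdorff measure, so `θ ↦ ∫ g (R_θ p)` is constant for every smooth `g`; differentiating under
the integral sign at `θ = 0` shows that the infinitesimal rotation `p₀ ∂₂g - p₂ ∂₀g` integrates to
zero. For `g = p₀ p₂ ρ` this infinitesimal rotation is `(p₀² - p₂²) ρ + 2β(γ₃ - γ₁) p₀² p₂² ρ`,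
so the self-consistency equations give `(γ₁ - γ₃) (1 - 2β ∫ p₀² p₂² ρ) = 0`.

Finiteness of `μH[2]` on the sphere, needed for the dominated differentiation, holds because the
sphere is the image of a square under the (Lipschitz) spherical coordinate map.
-/

open MeasureTheory

noncomputable def S2 : Set (EuclideanSpace ℝ (Fin 3)) := Metric.sphere 0 1

open Real

local notation "E3" => EuclideanSpace ℝ (Fin 3)

theorem sum_sq_eq_one_of_mem_S2 {p : E3} (hp : p ∈ S2) : p 0 ^ 2 + p 1 ^ 2 + p 2 ^ 2 = 1 := by
  have h : ‖p‖ ^ 2 = 1 := by simp_all [S2]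
  simpa [EuclideanSpace.norm_sq_eq, Fin.sum_univ_three] using h

noncomputable def sphericalCoords (x : Fin 2 → ℝ) : E3 :=
  !₂[cos (x 0) * cos (x 1), sin (x 0) * cos (x 1), sin (x 1)]

theorem S2_subset_image_sphericalCoords : S2 ⊆ sphericalCoords '' Metric.closedBall 0 π := by
  intro p hp
  have hsum := sum_sq_eq_one_of_mem_S2 hp
  have h2 : p 2 ∈ Set.Icc (-1 : ℝ) 1 := by
    rw [Set.mem_Icc, ← abs_le, ← sq_le_one_iff_abs_le_one]; nlinarith
  set z : ℂ := ⟨p 0, p 1⟩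
  have hz : ‖z‖ = cos (arcsin (p 2)) := by
    rw [cos_arcsin, Complex.norm_def, Complex.normSq_apply]
    congr 1; simp [z]; linarith
  refine ⟨![Complex.arg z, arcsin (p 2)], ?_, ?_⟩
  · rw [mem_closedBall_zero_iff, pi_norm_le_iff_of_nonneg pi_pos.le]
    intro i; fin_cases i
    · simpa using Complex.abs_arg_le_pi z
    · simpa [abs_le] using ⟨(neg_pi_div_two_le_arcsin _).trans' (by linarith [pi_pos]),
        (arcsin_le_pi_div_two _).trans (by linarith [pi_pos])⟩
  · ext i; fin_cases i
    · simp [sphericalCoords, ← hz, mul_comm, Complex.norm_mul_cos_arg, z]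
    · simp [sphericalCoords, ← hz, mul_comm, Complex.norm_mul_sin_arg, z]
    · simp [sphericalCoords, sin_arcsin' h2]

theorem hausdorffMeasure_S2_lt_top : μH[2] S2 < ⊤ := by
  have hsmooth : ContDiff ℝ 1 sphericalCoords :=
    contDiff_euclidean.2 fun i => by fin_cases i <;> simp [sphericalCoords] <;> fun_prop
  obtain ⟨K, hK⟩ := hsmooth.locallyLipschitz.locallyLipschitzOn.exists_lipschitzOnWith_of_compact
    (isCompact_closedBall (0 : Fin 2 → ℝ) π)
  have hsquare : μH[2] (Metric.closedBall (0 : Fin 2 → ℝ) π) < ⊤ := by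
    have hvol := hausdorffMeasure_pi_real (ι := Fin 2)
    simp only [Fintype.card_fin, Nat.cast_ofNat] at hvol
    rw [hvol]
    exact measure_closedBall_lt_top
  calc μH[2] S2 ≤ μH[2] (sphericalCoords '' Metric.closedBall 0 π) :=
        measure_mono S2_subset_image_sphericalCoords
    _ ≤ K ^ (2 : ℝ) * μH[2] (Metric.closedBall (0 : Fin 2 → ℝ) π) :=
        hK.hausdorffMeasure_image_le zero_le_two
    _ < ⊤ := ENNReal.mul_lt_top (by simp) hsquare

instance : IsFiniteMeasure ((μH[2] : Measure E3).restrict S2) :=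
  ⟨by rw [Measure.restrict_apply_univ]; exact hausdorffMeasure_S2_lt_top⟩

theorem Continuous.integrableOn_S2 {E : Type*} [NormedAddCommGroup E] {f : E3 → E}
    (hf : Continuous f) : IntegrableOn f S2 μH[2] := by
  obtain ⟨C, hC⟩ := (isCompact_sphere (0 : E3) 1).exists_bound_of_continuousOn hf.continuousOn
  exact Measure.integrableOn_of_bounded hausdorffMeasure_S2_lt_top.ne hf.aestronglyMeasurable
    (ae_restrict_of_forall_mem Metric.isClosed_sphere.measurableSet hC)

noncomputable def rotY (θ : ℝ) : E3 ≃ₗᵢ[ℝ] E3 :=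
  LinearIsometry.toLinearIsometryEquiv
    { toFun p := !₂[cos θ * p 0 - sin θ * p 2, p 1, sin θ * p 0 + cos θ * p 2]
      map_add' p q := by ext i; fin_cases i <;> simp <;> ring
      map_smul' c p := by ext i; fin_cases i <;> simp <;> ring
      norm_map' p := by
        rw [← sq_eq_sq₀ (norm_nonneg _) (norm_nonneg _)]
        simp [EuclideanSpace.norm_sq_eq, Fin.sum_univ_three]
        linear_combination (p 0 ^ 2 + p 2 ^ 2) * sin_sq_add_cos_sq θ }
    rfl

@[simp] theorem rotY_apply_zero (θ : ℝ) (p : E3) : rotY θ p 0 = cos θ * p 0 - sin θ * p 2 := rfl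

@[simp] theorem rotY_apply_one (θ : ℝ) (p : E3) : rotY θ p 1 = p 1 := rfl

@[simp] theorem rotY_apply_two (θ : ℝ) (p : E3) : rotY θ p 2 = sin θ * p 0 + cos θ * p 2 := rfl

@[simp] theorem rotY_zero (p : E3) : rotY 0 p = p := by
  ext i; fin_cases i <;> simp

theorem rotY_add (s t : ℝ) (p : E3) : rotY (s + t) p = rotY s (rotY t p) := by
  ext i; fin_cases i <;> simp [cos_add, sin_add] <;> ring

theorem rotY_preimage_S2 (θ : ℝ) : rotY θ ⁻¹' S2 = S2 := by
  simp [S2, LinearIsometryEquiv.preimage_sphere]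

theorem measurePreserving_rotY (θ : ℝ) :
    MeasurePreserving (rotY θ) (μH[2].restrict S2) (μH[2].restrict S2) := by
  have h := ((rotY θ).toIsometryEquiv.measurePreserving_hausdorffMeasure 2).restrict_preimage
    (s := S2) Metric.isClosed_sphere.measurableSet
  rwa [show (rotY θ).toIsometryEquiv ⁻¹' S2 = S2 from rotY_preimage_S2 θ] at h

theorem integral_comp_rotY (θ : ℝ) (g : E3 → ℝ) :
    ∫ p in S2, g (rotY θ p) ∂μH[2] = ∫ p in S2, g p ∂μH[2] :=
  (measurePreserving_rotY θ).integral_comp (rotY θ).toHomeomorph.measurableEmbedding g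

theorem integral_S2_eq_zero_of_hasDerivAt_rotY {g g' : E3 → ℝ} (hg : Continuous g)
    (hg' : Continuous g') (hderiv : ∀ p, HasDerivAt (fun θ => g (rotY θ p)) (g' p) 0) :
    ∫ p in S2, g' p ∂μH[2] = 0 := by
  obtain ⟨C, hC⟩ := (isCompact_sphere (0 : E3) 1).exists_bound_of_continuousOn hg'.continuousOn
  have hderiv_at (p : E3) (θ : ℝ) : HasDerivAt (fun θ => g (rotY θ p)) (g' (rotY θ p)) θ := by
    have h := HasDerivAt.comp_sub_const θ θ (by rw [sub_self]; exact hderiv (rotY θ p))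
    simpa [← rotY_add] using h
  have hdom := hasDerivAt_integral_of_dominated_loc_of_deriv_le (μ := μH[2].restrict S2)
    (F := fun θ p => g (rotY θ p)) (F' := fun θ p => g' (rotY θ p)) (x₀ := 0)
    (bound := fun _ => C) Filter.univ_mem
    (.of_forall fun θ => (hg.comp (rotY θ).continuous).aestronglyMeasurable)
    (hg.comp (rotY 0).continuous).integrableOn_S2
    (hg'.comp (rotY 0).continuous).aestronglyMeasurable
    (ae_restrict_of_forall_mem Metric.isClosed_sphere.measurableSet fun p hp θ _ =>
      hC _ (by simpa using hp))
    (integrable_const C) (.of_forall fun p θ _ => hderiv_at p θ)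
  have hconst : (fun θ => ∫ p in S2, g (rotY θ p) ∂μH[2]) = fun _ => ∫ p in S2, g p ∂μH[2] :=
    funext fun θ => integral_comp_rotY θ g
  have hzero := hdom.2
  rw [hconst] at hzero
  simpa using hzero.unique (hasDerivAt_const 0 _)

theorem hasDerivAt_rotY_apply_zero (p : E3) : HasDerivAt (fun θ => rotY θ p 0) (-p 2) 0 :=
  (((hasDerivAt_cos 0).mul_const (p 0)).sub ((hasDerivAt_sin 0).mul_const (p 2))).congr_deriv
    (by simp)

theorem hasDerivAt_rotY_apply_two (p : E3) : HasDerivAt (fun θ => rotY θ p 2) (p 0) 0 :=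
  (((hasDerivAt_sin 0).mul_const (p 0)).add ((hasDerivAt_cos 0).mul_const (p 2))).congr_deriv
    (by simp)

theorem hasDerivAt_rotY_apply_zero_mul_apply_two (p : E3) :
    HasDerivAt (fun θ => rotY θ p 0 * rotY θ p 2) (p 0 ^ 2 - p 2 ^ 2) 0 :=
  ((hasDerivAt_rotY_apply_zero p).mul (hasDerivAt_rotY_apply_two p)).congr_deriv (by simp; ring)

theorem hasDerivAt_rotY_diagQuadForm (γ₁ γ₂ γ₃ : ℝ) (p : E3) :
    HasDerivAt (fun θ => γ₁ * rotY θ p 0 ^ 2 + γ₂ * rotY θ p 1 ^ 2 + γ₃ * rotY θ p 2 ^ 2)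
      (2 * (γ₃ - γ₁) * (p 0 * p 2)) 0 :=
  ((((hasDerivAt_rotY_apply_zero p).pow 2).const_mul γ₁).add_const (γ₂ * p 1 ^ 2) |>.add
    (((hasDerivAt_rotY_apply_two p).pow 2).const_mul γ₃)).congr_deriv (by simp; ring)

theorem maierSaupe_identity (β γ₁ γ₂ γ₃ Z : ℝ)
    (ρ : EuclideanSpace ℝ (Fin 3) → ℝ)
    (hρ : ∀ p, ρ p = Z⁻¹ * Real.exp (β * (γ₁ * p 0 ^ 2 + γ₂ * p 1 ^ 2 + γ₃ * p 2 ^ 2)))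
    (h13 : γ₁ ≠ γ₃)
    (hsc1 : ∫ p in S2, p 0 ^ 2 * ρ p ∂(μH[2]) = γ₁)
    (hsc3 : ∫ p in S2, p 2 ^ 2 * ρ p ∂(μH[2]) = γ₃) :
    2 * β * ∫ p in S2, p 0 ^ 2 * p 2 ^ 2 * ρ p ∂(μH[2]) = 1 := by
  have hρ_cont : Continuous ρ := by rw [funext hρ]; fun_prop
  have hρ_deriv (p : E3) :
      HasDerivAt (fun θ => ρ (rotY θ p)) (2 * β * (γ₃ - γ₁) * (p 0 * p 2) * ρ p) 0 := by
    simp only [hρ]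
    exact (((hasDerivAt_rotY_diagQuadForm γ₁ γ₂ γ₃ p).const_mul β).exp.const_mul Z⁻¹).congr_deriv
      (by simp; ring)
  have hrot := integral_S2_eq_zero_of_hasDerivAt_rotY (g := fun p => p 0 * p 2 * ρ p)
    (g' := fun p => p 0 ^ 2 * ρ p - p 2 ^ 2 * ρ p + 2 * β * (γ₃ - γ₁) * (p 0 ^ 2 * p 2 ^ 2 * ρ p))
    (by fun_prop) (by fun_prop) fun p =>
      ((hasDerivAt_rotY_apply_zero_mul_apply_two p).mul (hρ_deriv p)).congr_deriv (by simp; ring)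
  rw [integral_add, integral_sub, integral_const_mul, hsc1, hsc3] at hrot
  · have hfactor : (γ₁ - γ₃) * (1 - 2 * β * ∫ p in S2, p 0 ^ 2 * p 2 ^ 2 * ρ p ∂(μH[2])) = 0 := by
      linear_combination hrot
    linarith [(mul_eq_zero.1 hfactor).resolve_left (sub_ne_zero.2 h13)]
  all_goals exact Continuous.integrableOn_S2 (by fun_prop)
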